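/- arXiv:2001.10874 — 6 statements merged into one kernel-verified Lean document; each statement's English description precedes it below -/
import Mathlib

section
/- Let f ∈ ℤ[T] be a monic irreducible polynomial of degree n with root α, and let K = ℚ(α). If 𝔞 is a fractional ℤ[α]-ideal in K, then 𝔞 is a free ℤ-module of rank n, and the matrix of multiplication by α with respect to any ℤ-basis of 𝔞 is an integer matrix whose characteristic polynomial is f. -/
/-!
The `ℚ`-span of a nonzero `ℤ[α]`-submodule `𝔞` of `K` is stable under `ℚ[α] = K`, hence is all
of `K`. As `ℤ[α]` is a finite `ℤ`-module, `𝔞` is therefore a `ℤ`-lattice in `K`: it is free of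
rank `[K : ℚ]`, and any `ℤ`-basis of `𝔞` is a `ℚ`-basis of `K`. In such a basis multiplication by
`α` has the same matrix on `𝔞` as on `K`, and on `K = ℚ(α)` its characteristic polynomial is the
minimal polynomial of `α`, which is `f` by Gauss's lemma.
-/

open Polynomial Module Submodule

section SpanOfSubmodule

variable {R F K : Type*} [CommRing R] [CommSemiring F] [Field K] [Algebra R K] [Algebra F K]
  {A : Subalgebra R K}

theorem Submodule.mul_mem_span_of_mem_adjoin (a : Submodule A K) {y : K}
    (hy : y ∈ Algebra.adjoin F (A : Set K)) {v : K} (hv : v ∈ span F (a : Set K)) :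
    y * v ∈ span F (a : Set K) := by
  induction hy using Algebra.adjoin_induction generalizing v with
  | mem z hz =>
    have hsmul : ∀ w ∈ a, z * w ∈ a := fun w hw => a.smul_mem (⟨z, hz⟩ : A) hw
    induction hv using span_induction with
    | mem w hw => exact subset_span (hsmul w hw)
    | zero => simp
    | add u w _ _ hu hw => simpa [mul_add] using add_mem hu hw
    | smul c w _ hw => simpa [mul_smul_comm] using smul_mem _ c hw
  | algebraMap c => simpa [← Algebra.smul_def] using smul_mem _ c hv
  | add y z _ _ hy hz => simpa [add_mul] using add_mem (hy hv) (hz hv)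
  | mul y z _ _ hy hz => simpa [mul_assoc] using hy (hz hv)

theorem Submodule.span_eq_top_of_adjoin_eq_top (hA : Algebra.adjoin F (A : Set K) = ⊤)
    {a : Submodule A K} (ha : a ≠ ⊥) : span F (a : Set K) = ⊤ := by
  obtain ⟨x, hx, hx0⟩ := exists_mem_ne_zero_of_ne_bot ha
  refine eq_top_iff.2 fun k _ => ?_
  have hk : k * x⁻¹ ∈ Algebra.adjoin F (A : Set K) := hA ▸ Algebra.mem_top
  simpa [mul_assoc, hx0] using mul_mem_span_of_mem_adjoin a hk (subset_span hx)

end SpanOfSubmodule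

theorem Submodule.isLattice_restrictScalars_of_adjoin_eq_top {R F K : Type*} [CommRing R]
    [Field F] [Field K] [Algebra R K] [Algebra F K] [Algebra R F] [IsScalarTower R F K]
    {A : Subalgebra R K} [Module.Finite R A] (hA : Algebra.adjoin F (A : Set K) = ⊤)
    {a : Submodule A K} (ha : a ≠ ⊥) (hafg : a.FG) : IsLattice F (a.restrictScalars R) where
  fg := hafg.restrictScalars
  span_eq_top := span_eq_top_of_adjoin_eq_top hA ha

theorem Module.Basis.toMatrix_extendOfIsLattice {R K V ι : Type*} [CommRing R] [Field K]
    [Algebra R K] [IsFractionRing R K] [AddCommGroup V] [Module K V] [Module R V]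
    [IsScalarTower R K V] [Fintype ι] [DecidableEq ι] {M : Submodule R V} [IsLattice K M]
    (b : Basis ι R M) {φ : M →ₗ[R] M} {ψ : V →ₗ[K] V} (h : ∀ x : M, ψ x = φ x) :
    LinearMap.toMatrix (b.extendOfIsLattice K) (b.extendOfIsLattice K) ψ =
      (LinearMap.toMatrix b b φ).map (algebraMap R K) := by
  ext i j
  have : ψ (b.extendOfIsLattice K j) =
      ∑ k, algebraMap R K (LinearMap.toMatrix b b φ k j) • b.extendOfIsLattice K k := by
    simp only [Basis.extendOfIsLattice_apply, h, LinearMap.toMatrix_apply, algebraMap_smul]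
    exact_mod_cast (congrArg Subtype.val (b.sum_repr (φ (b j)))).symm
  rw [LinearMap.toMatrix_apply, this, Basis.repr_sum_self, Matrix.map_apply]

theorem Algebra.charpoly_lmul_eq_minpoly {F S : Type*} [Field F] [CommRing S] [Algebra F S]
    [FiniteDimensional F S] {x : S} (hx : Algebra.adjoin F {x} = ⊤) :
    (Algebra.lmul F S x).charpoly = minpoly F x := by
  let pb := PowerBasis.ofAdjoinEqTop (Algebra.IsIntegral.isIntegral x) hx
  rw [← LinearMap.charpoly_toMatrix _ pb.basis, ← Algebra.leftMulMatrix_apply,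
    ← PowerBasis.ofAdjoinEqTop_gen (Algebra.IsIntegral.isIntegral x) hx, charpoly_leftMulMatrix]

theorem minpoly.eq_map_of_monic_of_irreducible {R K L : Type*} [CommRing R]
    [IsIntegrallyClosed R] [Field K] [Algebra R K] [IsFractionRing R K] [Ring L] [Nontrivial L]
    [Algebra R L] [Algebra K L] [IsScalarTower R K L] {f : R[X]} (hmonic : f.Monic)
    (hirr : Irreducible f) {x : L} (hx : Polynomial.aeval x f = 0) :
    minpoly K x = f.map (algebraMap R K) :=
  (eq_of_irreducible_of_monic (hmonic.irreducible_iff_irreducible_map_fraction_map.1 hirr)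
    (by rwa [aeval_map_algebraMap]) (hmonic.map _)).symm

theorem fractional_ideal_free_and_charpoly_general {K : Type*} [Field K] [NumberField K]
    (f : Polynomial ℤ) (n : ℕ) (hmonic : f.Monic)
    (hirr : Irreducible f) (α : K) (hroot : Polynomial.aeval α f = 0)
    (hgen : Algebra.adjoin ℚ ({α} : Set K) = ⊤)
    (hdim : Module.finrank ℚ K = n)
    (a : Submodule (Algebra.adjoin ℤ ({α} : Set K)) K) (ha : a ≠ ⊥) (hafg : a.FG) :
    Nonempty (Module.Basis (Fin n) ℤ a) ∧
    (∃ φ : a →ₗ[ℤ] a, ∀ x : a, (φ x : K) = α * (x : K)) ∧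
    (∀ (φ : a →ₗ[ℤ] a), (∀ x : a, (φ x : K) = α * (x : K)) →
      ∀ b : Module.Basis (Fin n) ℤ a, (LinearMap.toMatrix b b φ).charpoly = f) := by
  have : Module.Finite ℤ (Algebra.adjoin ℤ ({α} : Set K)) :=
    Module.Finite.iff_fg.2 (IsIntegral.fg_adjoin_singleton ⟨f, hmonic, hroot⟩)
  have : IsLattice ℚ (a.restrictScalars ℤ) := isLattice_restrictScalars_of_adjoin_eq_top
    (by rwa [Algebra.adjoin_adjoin_of_tower]) ha hafg
  have hrank : finrank ℤ (a.restrictScalars ℤ) = n := by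
    refine finrank_eq_of_rank_eq ?_
    rw [IsLattice.rank' ℚ, ← finrank_eq_rank, hdim]
  let αA : Algebra.adjoin ℤ ({α} : Set K) := ⟨α, Algebra.self_mem_adjoin_singleton ℤ α⟩
  refine ⟨⟨finBasisOfFinrankEq ℤ (a.restrictScalars ℤ) hrank⟩,
    ⟨(LinearMap.lsmul _ a αA).restrictScalars ℤ, fun _ => rfl⟩, fun φ hφ b => ?_⟩
  apply map_injective (algebraMap ℤ ℚ) (RingHom.injective_int _)
  let bK := b.extendOfIsLattice (M := a.restrictScalars ℤ) ℚ
  calc (LinearMap.toMatrix b b φ).charpoly.map (algebraMap ℤ ℚ)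
      = ((LinearMap.toMatrix b b φ).map (algebraMap ℤ ℚ)).charpoly :=
        (Matrix.charpoly_map _ _).symm
    _ = (LinearMap.toMatrix bK bK (Algebra.lmul ℚ K α)).charpoly :=
      congrArg _ (Basis.toMatrix_extendOfIsLattice (M := a.restrictScalars ℤ) b
        (ψ := Algebra.lmul ℚ K α) fun x => (hφ x).symm).symm
    _ = minpoly ℚ α := by
      rw [LinearMap.charpoly_toMatrix, Algebra.charpoly_lmul_eq_minpoly hgen]
    _ = f.map (algebraMap ℤ ℚ) := minpoly.eq_map_of_monic_of_irreducible hmonic hirr hroot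

/-- A fractional `ℤ[α]`-ideal `𝔞` in `K = ℚ(α)` is free of rank `n` over `ℤ`, and
the matrix of multiplication by `α` in any `ℤ`-basis has characteristic polynomial `f`. -/
theorem fractional_ideal_free_and_charpoly {K : Type*} [Field K] [NumberField K]
    (f : Polynomial ℤ) (n : ℕ) (hn : f.natDegree = n) (hmonic : f.Monic)
    (hirr : Irreducible f) (α : K) (hroot : Polynomial.aeval α f = 0)
    (hgen : Algebra.adjoin ℚ ({α} : Set K) = ⊤)
    (hdim : Module.finrank ℚ K = n)
    (a : Submodule (Algebra.adjoin ℤ ({α} : Set K)) K) (ha : a ≠ ⊥) (hafg : a.FG) :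
    Nonempty (Module.Basis (Fin n) ℤ a) ∧
    (∃ φ : a →ₗ[ℤ] a, ∀ x : a, (φ x : K) = α * (x : K)) ∧
    (∀ (φ : a →ₗ[ℤ] a), (∀ x : a, (φ x : K) = α * (x : K)) →
      ∀ b : Module.Basis (Fin n) ℤ a, (LinearMap.toMatrix b b φ).charpoly = f) :=
  fractional_ideal_free_and_charpoly_general f n hmonic hirr α hroot hgen hdim a ha hafg
end

section
/- Let f ∈ ℤ[T] be a monic irreducible polynomial of degree n with root α. If 𝔞 and 𝔟 = x·𝔞 (for some x ∈ K*) are equivalent fractional ℤ[α]-ideals in K = ℚ(α), then the matrices representing multiplication by α on 𝔞 and on 𝔟 (with respect to suitable ℤ-bases) are conjugate by an element of GL_n(ℤ). -/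
/-!
Multiplication by `x` is an isomorphism `𝔞 ≃ 𝔟` of `ℤ[α]`-modules, so it commutes with
multiplication by `α`; transporting a `ℤ`-basis of `𝔞` along it gives a basis of `𝔟` in which `α`
acts by the same matrix, and one may take `U = V = 1`. The bases have `n` elements because `𝔞` is
a finitely generated module over the finite `ℤ`-algebra `ℤ[α]`, is torsion-free, and spans
`K = ℚ(α)` over `ℚ`.
-/

open Module

theorem LinearMap.toMatrix_basis_map_of_comp_eq {R M N ι : Type*} [CommRing R] [AddCommGroup M]
    [Module R M] [AddCommGroup N] [Module R N] [Fintype ι] [DecidableEq ι]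
    (b : Basis ι R M) (e : M ≃ₗ[R] N) {f : M →ₗ[R] M} {g : N →ₗ[R] N}
    (h : ∀ y, g (e y) = e (f y)) :
    LinearMap.toMatrix (b.map e) (b.map e) g = LinearMap.toMatrix b b f := by
  ext i j
  simp [LinearMap.toMatrix_apply, h]

theorem Module.finrank_eq_of_injective_of_span_eq_top {R F M V : Type*} [CommRing R] [IsDomain R]
    [Field F] [Algebra R F] [IsFractionRing R F] [AddCommGroup M] [Module R M] [Module.Free R M]
    [Module.Finite R M] [AddCommGroup V] [Module R V] [Module F V] [IsScalarTower R F V]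
    {i : M →ₗ[R] V} (hi : Function.Injective i) (hspan : Submodule.span F (Set.range i) = ⊤) :
    finrank R M = finrank F V := by
  let c := Module.finBasis R M
  have hind : LinearIndependent F (i ∘ c) :=
    (LinearIndependent.iff_fractionRing R F).mp
      (c.linearIndependent.map' i (LinearMap.ker_eq_bot.mpr hi))
  have hspan' : Submodule.span F (Set.range (i ∘ c)) = ⊤ := by
    rw [← Submodule.span_span_of_tower R, Set.range_comp, Submodule.span_image, c.span_eq,
      Submodule.map_top, LinearMap.coe_range, hspan]
  rw [← finrank_top F V, ← hspan', finrank_span_eq_card hind, Fintype.card_fin]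

theorem Submodule.span_eq_top_of_adjoin_eq_top_s4 {R F K : Type*} [CommRing R] [Field F] [Field K]
    [Algebra R K] [Algebra F K] {A : Subalgebra R K} {a : Submodule A K} (ha : a ≠ ⊥)
    {s : Set K} (hsA : s ⊆ A) (hs : Algebra.adjoin F s = ⊤) :
    Submodule.span F (a : Set K) = ⊤ := by
  obtain ⟨v, hva, hv⟩ := a.ne_bot_iff.mp ha
  have hclosure : ∀ t ∈ Submonoid.closure s, t * v ∈ a := fun t ht =>
    a.smul_mem ⟨t, Submonoid.closure_le.mpr hsA ht⟩ hva
  have hsurj : Function.Surjective (LinearMap.mulRight F v) := fun k =>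
    ⟨k * v⁻¹, by simp [hv]⟩
  rw [eq_top_iff]
  calc (⊤ : Submodule F K)
      = (Submodule.span F (Submonoid.closure s : Set K)).map (LinearMap.mulRight F v) := by
        rw [← Algebra.adjoin_eq_span, hs, Algebra.top_toSubmodule, Submodule.map_top,
          LinearMap.range_eq_top.mpr hsurj]
    _ = Submodule.span F (LinearMap.mulRight F v '' Submonoid.closure s) :=
        (Submodule.span_image _).symm
    _ ≤ Submodule.span F (a : Set K) :=
        Submodule.span_mono (Set.image_subset_iff.mpr hclosure)

theorem Submodule.exists_linearEquiv_of_coe_eq_mulLeft_image {R K : Type*} [CommRing R]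
    [CommRing K] [NoZeroDivisors K] [Algebra R K] {a b : Submodule R K} {x : K} (hx : x ≠ 0)
    (hab : (b : Set K) = (fun y => x * y) '' (a : Set K)) :
    ∃ e : a ≃ₗ[R] b, ∀ y, (e y : K) = x * y :=
  ⟨(a.equivMapOfInjective (LinearMap.mulLeft R x) (mul_right_injective₀ hx)).trans
    (LinearEquiv.ofEq _ _ (SetLike.coe_injective (by rw [Submodule.map_coe]; exact hab.symm))),
    fun _ => rfl⟩

theorem equiv_ideals_give_conjugate_matrices_general {K : Type*} [Field K] [NumberField K]
    (f : Polynomial ℤ) (n : ℕ) (hmonic : f.Monic)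
    (α : K) (hroot : Polynomial.aeval α f = 0)
    (hgen : Algebra.adjoin ℚ ({α} : Set K) = ⊤)
    (hdim : Module.finrank ℚ K = n)
    (a b : Submodule (Algebra.adjoin ℤ ({α} : Set K)) K)
    (ha : a ≠ ⊥) (hafg : a.FG)
    (x : K) (hx : x ≠ 0) (hab : (b : Set K) = (fun y => x * y) '' (a : Set K)) :
    ∃ (ba : Module.Basis (Fin n) ℤ a) (bb : Module.Basis (Fin n) ℤ b)
      (φa : a →ₗ[ℤ] a) (φb : b →ₗ[ℤ] b),
      (∀ y : a, (φa y : K) = α * (y : K)) ∧ (∀ y : b, (φb y : K) = α * (y : K)) ∧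
      ∃ U V : Matrix (Fin n) (Fin n) ℤ, U * V = 1 ∧ V * U = 1 ∧
        LinearMap.toMatrix bb bb φb = U * LinearMap.toMatrix ba ba φa * V := by
  have : Module.Finite ℤ (Algebra.adjoin ℤ ({α} : Set K)) :=
    Algebra.finite_adjoin_simple_of_isIntegral ⟨f, hmonic, hroot⟩
  have : Module.Finite (Algebra.adjoin ℤ ({α} : Set K)) a := Module.Finite.iff_fg.mpr hafg
  have : Module.Finite ℤ a := Module.Finite.trans (Algebra.adjoin ℤ ({α} : Set K)) a
  have hspan : Submodule.span ℚ (Set.range (a.subtype.restrictScalars ℤ)) = ⊤ := by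
    rw [LinearMap.coe_restrictScalars, Submodule.coe_subtype, Subtype.range_coe]
    exact Submodule.span_eq_top_of_adjoin_eq_top_s4 ha
      (Set.singleton_subset_iff.mpr (Algebra.self_mem_adjoin_singleton ℤ α)) hgen
  have hrank : finrank ℤ a = n :=
    hdim ▸ Module.finrank_eq_of_injective_of_span_eq_top Subtype.val_injective hspan
  obtain ⟨e, -⟩ := Submodule.exists_linearEquiv_of_coe_eq_mulLeft_image hx hab
  let ba := (finBasis ℤ a).reindex (finCongr hrank)
  let αA : Algebra.adjoin ℤ ({α} : Set K) := ⟨α, Algebra.self_mem_adjoin_singleton ℤ α⟩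
  refine ⟨ba, ba.map (e.restrictScalars ℤ), (LinearMap.lsmul _ a αA).restrictScalars ℤ,
    (LinearMap.lsmul _ b αA).restrictScalars ℤ, fun _ => rfl, fun _ => rfl, 1, 1, one_mul 1,
    one_mul 1, ?_⟩
  rw [Matrix.one_mul, Matrix.mul_one]
  exact LinearMap.toMatrix_basis_map_of_comp_eq ba _ fun y => (e.map_smul αA y).symm

/-- If `𝔟 = x·𝔞` are equivalent fractional `ℤ[α]`-ideals, then the matrices of
multiplication by `α` on `𝔞` and `𝔟` (in suitable `ℤ`-bases) are `GL_n(ℤ)`-conjugate. -/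
theorem equiv_ideals_give_conjugate_matrices {K : Type*} [Field K] [NumberField K]
    (f : Polynomial ℤ) (n : ℕ) (hn : f.natDegree = n) (hmonic : f.Monic)
    (hirr : Irreducible f) (α : K) (hroot : Polynomial.aeval α f = 0)
    (hgen : Algebra.adjoin ℚ ({α} : Set K) = ⊤)
    (hdim : Module.finrank ℚ K = n)
    (a b : Submodule (Algebra.adjoin ℤ ({α} : Set K)) K)
    (ha : a ≠ ⊥) (hafg : a.FG) (hb : b ≠ ⊥) (hbfg : b.FG)
    (x : K) (hx : x ≠ 0) (hab : (b : Set K) = (fun y => x * y) '' (a : Set K)) :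
    ∃ (ba : Module.Basis (Fin n) ℤ a) (bb : Module.Basis (Fin n) ℤ b)
      (φa : a →ₗ[ℤ] a) (φb : b →ₗ[ℤ] b),
      (∀ y : a, (φa y : K) = α * (y : K)) ∧ (∀ y : b, (φb y : K) = α * (y : K)) ∧
      ∃ U V : Matrix (Fin n) (Fin n) ℤ, U * V = 1 ∧ V * U = 1 ∧
        LinearMap.toMatrix bb bb φb = U * LinearMap.toMatrix ba ba φa * V :=
  equiv_ideals_give_conjugate_matrices_general f n hmonic α hroot hgen hdim a b ha hafg x hx hab
end

section
/- Let f ∈ ℤ[T] be monic irreducible of degree n with root α. For every integer matrix A ∈ M_n(ℤ) with f(A) = 0, there exists a fractional ℤ[α]-ideal 𝔞 in ℚ(α) and a ℤ-basis of 𝔞 with respect to which the matrix of multiplication by α on 𝔞 equals A. -/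
/-!
Since `f` is irreducible it is the minimal polynomial of `A` over `ℚ`, so it divides the
characteristic polynomial of `A` and `α` is an eigenvalue of `A` over `K`. A left eigenvector `v`
satisfies `α * v j = ∑ i, A i j • v i`, so the `ℤ`-span of the `v i` is stable under `α`, i.e. it is
a `ℤ[α]`-module. Its `ℚ`-span is a nonzero `ℚ(α)`-subspace of `K = ℚ(α)`, hence all of `K`; as
there are `n = [K : ℚ]` vectors `v i`, they are linearly independent, and in this basis
multiplication by `α` has matrix `A`.
-/

open Polynomial Matrix Submodule

theorem Matrix.exists_vecMul_eq_smul_of_eval_charpoly_eq_zero {K ι : Type*} [Field K] [Fintype ι]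
    [DecidableEq ι] {M : Matrix ι ι K} {μ : K} (h : M.charpoly.eval μ = 0) :
    ∃ v ≠ 0, v ᵥ* M = μ • v := by
  rw [eval_charpoly] at h
  obtain ⟨v, hv0, hv⟩ := exists_vecMul_eq_zero_iff.mpr h
  refine ⟨v, hv0, ?_⟩
  rw [vecMul_sub, sub_eq_zero, scalar_apply] at hv
  rw [← hv]
  ext i
  simp [vecMul_diagonal, mul_comm]

theorem Matrix.aeval_charpoly_eq_zero_of_aeval_eq_zero {K ι : Type*} [CommRing K] [Algebra ℚ K]
    [Fintype ι] [DecidableEq ι] [Nonempty ι] {f : ℤ[X]} (hmonic : f.Monic) (hirr : Irreducible f)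
    {A : Matrix ι ι ℤ} (hA : aeval A f = 0) {α : K} (hα : aeval α f = 0) :
    aeval α A.charpoly = 0 := by
  set B : Matrix ι ι ℚ := A.map (algebraMap ℤ ℚ)
  have hB : aeval B (f.map (algebraMap ℤ ℚ)) = 0 := by
    rw [aeval_map_algebraMap]
    have h := aeval_algHom_apply ((Algebra.ofId ℤ ℚ).mapMatrix (m := ι)) A f
    rw [hA, map_zero] at h
    exact h
  have hminpoly : f.map (algebraMap ℤ ℚ) = minpoly ℚ B :=
    minpoly.eq_of_irreducible_of_monic
      (hmonic.irreducible_iff_irreducible_map_fraction_map.mp hirr) hB (hmonic.map _)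
  have hdvd : f.map (algebraMap ℤ ℚ) ∣ A.charpoly.map (algebraMap ℤ ℚ) := by
    rw [hminpoly, ← charpoly_map]
    exact minpoly.dvd ℚ B (aeval_self_charpoly B)
  rw [← aeval_map_algebraMap ℚ]
  exact aeval_eq_zero_of_dvd_aeval_eq_zero hdvd (by rwa [aeval_map_algebraMap])

theorem Matrix.mul_eq_sum_of_vecMul_eq_smul {K ι : Type*} [CommRing K] [Fintype ι]
    {A : Matrix ι ι ℤ} {v : ι → K} {α : K} (hv : v ᵥ* A.map (algebraMap ℤ K) = α • v) (j : ι) :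
    α * v j = ∑ i, A i j • v i := by
  simpa [vecMul, dotProduct, mul_comm] using (congrFun hv j).symm

theorem Submodule.mul_mem_span_range_of_vecMul_eq_smul {R K ι : Type*} [CommRing R] [CommRing K]
    [Algebra R K] [Fintype ι] {A : Matrix ι ι ℤ} {v : ι → K} {α : K}
    (hv : v ᵥ* A.map (algebraMap ℤ K) = α • v) {x : K} (hx : x ∈ span R (Set.range v)) :
    α * x ∈ span R (Set.range v) := by
  suffices (span R (Set.range v)).map (LinearMap.mulLeft R α) ≤ span R (Set.range v) from
    this (mem_map_of_mem hx)
  rw [map_span_le]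
  rintro _ ⟨j, rfl⟩
  rw [LinearMap.mulLeft_apply, mul_eq_sum_of_vecMul_eq_smul hv]
  exact sum_mem fun i _ => zsmul_mem (subset_span (Set.mem_range_self i)) _

theorem Submodule.mul_mem_of_mem_adjoin_singleton {R K : Type*} [CommSemiring R] [CommSemiring K]
    [Algebra R K] {α : K} {N : Submodule R K} (hN : ∀ x ∈ N, α * x ∈ N) {y : K}
    (hy : y ∈ Algebra.adjoin R {α}) : ∀ x ∈ N, y * x ∈ N := by
  induction hy using Algebra.adjoin_induction with
  | mem z hz => exact (Set.mem_singleton_iff.mp hz) ▸ hN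
  | algebraMap r => exact fun x hx => (Algebra.smul_def r x) ▸ N.smul_mem r hx
  | add p q _ _ hp hq => exact fun x hx => (add_mul p q x).symm ▸ N.add_mem (hp x hx) (hq x hx)
  | mul p q _ _ hp hq => exact fun x hx => (mul_assoc p q x) ▸ hp _ (hq x hx)

theorem Submodule.restrictScalars_span_adjoin_singleton {R K : Type*} [CommSemiring R]
    [CommSemiring K] [Algebra R K] {α : K} {s : Set K}
    (hs : ∀ x ∈ span R s, α * x ∈ span R s) :
    (span (Algebra.adjoin R {α}) s).restrictScalars R = span R s := by
  refine le_antisymm (fun x hx => ?_) (span_le_restrictScalars R _ s)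
  induction hx using span_induction with
  | mem x hx => exact subset_span hx
  | zero => exact zero_mem _
  | add x y _ _ hx hy => exact add_mem hx hy
  | smul c x _ hx => exact mul_mem_of_mem_adjoin_singleton hs c.2 x hx

theorem Submodule.eq_top_of_mul_mem_of_adjoin_eq_top {F K : Type*} [Field F] [Field K]
    [Algebra F K] {α : K} (hgen : Algebra.adjoin F {α} = ⊤) {N : Submodule F K}
    (hN : ∀ x ∈ N, α * x ∈ N) (hne : N ≠ ⊥) : N = ⊤ := by
  obtain ⟨w, hw, hw0⟩ := N.ne_bot_iff.mp hne
  refine eq_top_iff.mpr fun x _ => ?_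
  have hx : x * w⁻¹ * w = x := by field_simp
  rw [← hx]
  exact mul_mem_of_mem_adjoin_singleton hN (hgen ▸ Algebra.mem_top) w hw

theorem exists_basis_toMatrix_eq_of_vecMul_eq_smul {K ι : Type*} [CommRing K] [Fintype ι]
    [DecidableEq ι] {A : Matrix ι ι ℤ} {v : ι → K} {α : K} (hli : LinearIndependent ℤ v)
    (hv : v ᵥ* A.map (algebraMap ℤ K) = α • v) :
    let a := span (Algebra.adjoin ℤ {α}) (Set.range v)
    ∃ (b : Module.Basis ι ℤ a) (φ : a →ₗ[ℤ] a),
      (∀ x, (φ x : K) = α * x) ∧ LinearMap.toMatrix b b φ = A := by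
  intro a
  have ha : a.restrictScalars ℤ = span ℤ (Set.range v) :=
    restrictScalars_span_adjoin_singleton fun _ => mul_mem_span_range_of_vecMul_eq_smul hv
  let b : Module.Basis ι ℤ a := ((Module.Basis.span hli).map (LinearEquiv.ofEq _ _ ha.symm)).map
    ((a.restrictScalarsEquiv ℤ).restrictScalars ℤ)
  have hb : ∀ i, (b i : K) = v i := fun i => by
    simp only [b, Module.Basis.map_apply, Module.Basis.span_apply]
    rfl
  let φ : a →ₗ[ℤ] a :=
    DistribSMul.toLinearMap ℤ a (⟨α, Algebra.self_mem_adjoin_singleton ℤ α⟩ : Algebra.adjoin ℤ {α})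
  have hφ : ∀ x, (φ x : K) = α * x := fun x => rfl
  refine ⟨b, φ, hφ, ?_⟩
  suffices φ = Matrix.toLin b b A by rw [this, LinearMap.toMatrix_toLin]
  refine b.ext fun j => Subtype.ext ?_
  rw [hφ, Matrix.toLin_self, hb, mul_eq_sum_of_vecMul_eq_smul hv]
  simp [hb]

theorem matrix_realized_by_fractional_ideal_general {K : Type*} [Field K] [NumberField K]
    (f : Polynomial ℤ) (n : ℕ) (hmonic : f.Monic)
    (hirr : Irreducible f) (α : K) (hroot : Polynomial.aeval α f = 0)
    (hgen : Algebra.adjoin ℚ ({α} : Set K) = ⊤)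
    (hdim : Module.finrank ℚ K = n)
    (A : Matrix (Fin n) (Fin n) ℤ)
    (hA : Polynomial.aeval A f = 0) :
    ∃ a : Submodule (Algebra.adjoin ℤ ({α} : Set K)) K, a ≠ ⊥ ∧ a.FG ∧
      ∃ (b : Module.Basis (Fin n) ℤ a) (φ : a →ₗ[ℤ] a),
        (∀ x : a, (φ x : K) = α * (x : K)) ∧ LinearMap.toMatrix b b φ = A := by
  have : Nonempty (Fin n) := Fin.pos_iff_nonempty.mp (hdim ▸ Module.finrank_pos)
  have hchar : (A.map (algebraMap ℤ K)).charpoly.eval α = 0 := by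
    rw [charpoly_map, eval_map, ← aeval_def]
    exact aeval_charpoly_eq_zero_of_aeval_eq_zero hmonic hirr hA hroot
  obtain ⟨v, hv0, hv⟩ := exists_vecMul_eq_smul_of_eval_charpoly_eq_zero hchar
  have hne : ∃ i, v i ≠ 0 := Function.ne_iff.mp hv0
  have hspan : span ℚ (Set.range v) = ⊤ :=
    eq_top_of_mul_mem_of_adjoin_eq_top hgen (fun _ => mul_mem_span_range_of_vecMul_eq_smul hv)
      (by simpa [span_eq_bot] using hne)
  have hli : LinearIndependent ℤ v :=
    (linearIndependent_of_top_le_span_of_card_eq_finrank hspan.ge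
      (by simp [hdim])).restrict_scalars' ℤ
  refine ⟨span _ (Set.range v), ?_, fg_span (Set.finite_range v),
    exists_basis_toMatrix_eq_of_vecMul_eq_smul hli hv⟩
  simpa [span_eq_bot] using hne

/-- Surjectivity in Latimer–MacDuffee: every integer matrix `A` with `f(A) = 0` is the
matrix of multiplication by `α` on some fractional `ℤ[α]`-ideal in some `ℤ`-basis. -/
theorem matrix_realized_by_fractional_ideal {K : Type*} [Field K] [NumberField K]
    (f : Polynomial ℤ) (n : ℕ) (hn : f.natDegree = n) (hmonic : f.Monic)
    (hirr : Irreducible f) (α : K) (hroot : Polynomial.aeval α f = 0)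
    (hgen : Algebra.adjoin ℚ ({α} : Set K) = ⊤)
    (hdim : Module.finrank ℚ K = n)
    (A : Matrix (Fin n) (Fin n) ℤ)
    (hA : Polynomial.aeval A f = 0) :
    ∃ a : Submodule (Algebra.adjoin ℤ ({α} : Set K)) K, a ≠ ⊥ ∧ a.FG ∧
      ∃ (b : Module.Basis (Fin n) ℤ a) (φ : a →ₗ[ℤ] a),
        (∀ x : a, (φ x : K) = α * (x : K)) ∧ LinearMap.toMatrix b b φ = A :=
  matrix_realized_by_fractional_ideal_general f n hmonic hirr α hroot hgen hdim A hA
end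

section
/- Let f ∈ ℤ[T] be monic irreducible of degree n with root α. If 𝔞 and 𝔟 are fractional ℤ[α]-ideals in K = ℚ(α) such that the matrices of multiplication by α with respect to some ℤ-bases of 𝔞 and 𝔟 are GL_n(ℤ)-conjugate, then 𝔟 = x·𝔞 for some x ∈ K*. -/
/-!
Matrices `U`, `V` conjugating the two multiplication-by-`α` matrices define a `ℤ`-isomorphism
`𝔞 ≃ 𝔟` that commutes with multiplication by `α`, hence is `ℤ[α]`-linear. As `ℤ[α]` has
fraction field `K`, a `ℤ[α]`-linear map `ψ` on a fractional ideal is multiplication by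
`ψ c / c` for any `c ≠ 0`: writing `y / c = r / s` with `r, s ∈ ℤ[α]` gives `s y = r c`,
hence `s ψ y = r ψ c`.
-/

open Algebra

theorem Algebra.isFractionRing_adjoin_of_adjoin_eq_top {R F K : Type*} [CommRing R]
    [Field F] [Algebra R F] [IsFractionRing R F] [Field K] [Algebra R K] [Algebra F K]
    [IsScalarTower R F K] {s : Set K} (hs : adjoin F s = ⊤) :
    IsFractionRing (adjoin R s) K := by
  have := Module.nontrivial R F
  refine IsFractionRing.of_field _ K fun z ↦ ?_
  obtain ⟨t, ht⟩ := multiple_mem_adjoin_of_mem_localization_adjoin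
    (nonZeroDivisors R) F s z (hs ▸ mem_top)
  refine ⟨⟨_, ht⟩, algebraMap R _ t, ?_⟩
  have ht0 : algebraMap R K t ≠ 0 := by
    rw [IsScalarTower.algebraMap_apply R F K, map_ne_zero]
    exact IsFractionRing.to_map_ne_zero_of_mem_nonZeroDivisors t.2
  change z = t • z / algebraMap R K t
  rw [Submonoid.smul_def, Algebra.smul_def, mul_div_cancel_left₀ _ ht0]

section FractionalIdeal

variable {R K : Type*} [CommRing R] [Field K] [Algebra R K] [IsFractionRing R K]

theorem LinearMap.exists_apply_eq_mul {a : Submodule R K} (ψ : a →ₗ[R] K) :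
    ∃ x : K, ∀ y : a, ψ y = x * y := by
  have := Module.nontrivial R K
  obtain rfl | ha := eq_or_ne a ⊥
  · exact ⟨0, fun y ↦ by simp [Subsingleton.elim y 0]⟩
  obtain ⟨c, hca, hc0⟩ := (Submodule.ne_bot_iff a).mp ha
  refine ⟨ψ ⟨c, hca⟩ / c, fun y ↦ ?_⟩
  obtain ⟨⟨r, s⟩, hrs⟩ := IsLocalization.surj (nonZeroDivisors R) ((y : K) / c)
  have hs0 : algebraMap R K s ≠ 0 := IsFractionRing.to_map_ne_zero_of_mem_nonZeroDivisors s.2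
  have hsyK : algebraMap R K s * y = algebraMap R K r * c := by
    field_simp at hrs
    linear_combination hrs
  have hsy : (s : R) • y = r • ⟨c, hca⟩ := by
    ext
    simpa only [Submodule.coe_smul, Algebra.smul_def] using hsyK
  have hψ : algebraMap R K s * ψ y = algebraMap R K r * ψ ⟨c, hca⟩ := by
    simpa only [map_smul, Algebra.smul_def] using congrArg ψ hsy
  rw [div_mul_eq_mul_div, eq_div_iff hc0]
  apply mul_left_cancel₀ hs0
  linear_combination c * hψ - ψ ⟨c, hca⟩ * hsyK

theorem LinearEquiv.exists_ne_zero_eq_image_mul {a b : Submodule R K} (e : a ≃ₗ[R] b) :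
    ∃ x : K, x ≠ 0 ∧ (b : Set K) = (fun y ↦ x * y) '' a := by
  obtain rfl | ha := eq_or_ne a ⊥
  · have : Subsingleton b := e.symm.injective.subsingleton
    refine ⟨1, one_ne_zero, ?_⟩
    simp [(Submodule.eq_bot_of_subsingleton : b = ⊥)]
  obtain ⟨x, hx⟩ := (b.subtype ∘ₗ e.toLinearMap).exists_apply_eq_mul
  replace hx : ∀ y : a, (e y : K) = x * y := hx
  obtain ⟨c, hca, hc0⟩ := (Submodule.ne_bot_iff a).mp ha
  have hec : (e ⟨c, hca⟩ : K) ≠ 0 := by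
    simpa using e.map_ne_zero_iff.mpr (Subtype.coe_ne_coe.mp hc0 : (⟨c, hca⟩ : a) ≠ 0)
  refine ⟨x, left_ne_zero_of_mul (hx ⟨c, hca⟩ ▸ hec), Set.Subset.antisymm ?_ ?_⟩
  · intro z hz
    exact ⟨e.symm ⟨z, hz⟩, (e.symm ⟨z, hz⟩).2, by simpa using (hx (e.symm ⟨z, hz⟩)).symm⟩
  · rintro _ ⟨y, hy, rfl⟩
    simpa using hx ⟨y, hy⟩ ▸ (e ⟨y, hy⟩).2

end FractionalIdeal

section AdjoinLinear

variable {R S M N : Type*} [CommSemiring R] [CommSemiring S] [Algebra R S] {s : Set S}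
  [AddCommMonoid M] [Module R M] [Module (adjoin R s) M] [IsScalarTower R (adjoin R s) M]
  [AddCommMonoid N] [Module R N] [Module (adjoin R s) N] [IsScalarTower R (adjoin R s) N]

theorem LinearMap.map_adjoin_smul (ψ : M →ₗ[R] N)
    (hψ : ∀ x (hx : x ∈ s) m, ψ ((⟨x, subset_adjoin hx⟩ : adjoin R s) • m) =
      (⟨x, subset_adjoin hx⟩ : adjoin R s) • ψ m)
    (r : adjoin R s) (m : M) : ψ (r • m) = r • ψ m := by
  obtain ⟨r, hr⟩ := r
  induction hr using adjoin_induction generalizing m with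
  | mem x hx => exact hψ x hx m
  | algebraMap k =>
    change ψ (algebraMap R (adjoin R s) k • m) = algebraMap R (adjoin R s) k • ψ m
    simp only [algebraMap_smul, map_smul]
  | add x y hx hy ihx ihy =>
    change ψ ((⟨x, hx⟩ + ⟨y, hy⟩ : adjoin R s) • m) = (⟨x, hx⟩ + ⟨y, hy⟩ : adjoin R s) • ψ m
    rw [add_smul, add_smul, map_add, ihx, ihy]
  | mul x y hx hy ihx ihy =>
    change ψ ((⟨x, hx⟩ * ⟨y, hy⟩ : adjoin R s) • m) = (⟨x, hx⟩ * ⟨y, hy⟩ : adjoin R s) • ψ m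
    rw [mul_smul, mul_smul, ihx, ihy]

def LinearEquiv.adjoinLift (e : M ≃ₗ[R] N)
    (he : ∀ x (hx : x ∈ s) m, e ((⟨x, subset_adjoin hx⟩ : adjoin R s) • m) =
      (⟨x, subset_adjoin hx⟩ : adjoin R s) • e m) :
    M ≃ₗ[adjoin R s] N :=
  { e with map_smul' := e.toLinearMap.map_adjoin_smul he }

end AdjoinLinear

theorem Matrix.toLinOfInv_comp_eq_comp_toLinOfInv {R M₁ M₂ ι : Type*} [CommRing R]
    [AddCommMonoid M₁] [Module R M₁] [AddCommMonoid M₂] [Module R M₂] [Fintype ι] [DecidableEq ι]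
    (b₁ : Module.Basis ι R M₁) (b₂ : Module.Basis ι R M₂) {U V : Matrix ι ι R}
    (hUV : U * V = 1) (hVU : V * U = 1) {φ₁ : M₁ →ₗ[R] M₁} {φ₂ : M₂ →ₗ[R] M₂}
    (h : LinearMap.toMatrix b₂ b₂ φ₂ = U * LinearMap.toMatrix b₁ b₁ φ₁ * V) :
    (toLinOfInv b₁ b₂ hUV hVU).toLinearMap ∘ₗ φ₁ = φ₂ ∘ₗ toLinOfInv b₁ b₂ hUV hVU := by
  apply (LinearMap.toMatrix b₁ b₂).injective
  have hU : LinearMap.toMatrix b₁ b₂ (toLinOfInv b₁ b₂ hUV hVU) = U :=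
    LinearMap.toMatrix_toLin _ _ _
  rw [LinearMap.toMatrix_comp b₁ b₁ b₂, LinearMap.toMatrix_comp b₁ b₂ b₂, hU, h,
    Matrix.mul_assoc _ V U, hVU, Matrix.mul_one]

theorem conjugate_matrices_give_equiv_ideals_general {K : Type*} [Field K] [NumberField K]
    (n : ℕ) (α : K)
    (hgen : Algebra.adjoin ℚ ({α} : Set K) = ⊤)
    (a b : Submodule (Algebra.adjoin ℤ ({α} : Set K)) K)
    (ba : Module.Basis (Fin n) ℤ a) (bb : Module.Basis (Fin n) ℤ b)
    (φa : a →ₗ[ℤ] a) (φb : b →ₗ[ℤ] b)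
    (hφa : ∀ y : a, (φa y : K) = α * (y : K)) (hφb : ∀ y : b, (φb y : K) = α * (y : K))
    (U V : Matrix (Fin n) (Fin n) ℤ) (hUV : U * V = 1) (hVU : V * U = 1)
    (hconj : LinearMap.toMatrix bb bb φb = U * LinearMap.toMatrix ba ba φa * V) :
    ∃ x : K, x ≠ 0 ∧ (b : Set K) = (fun y => x * y) '' (a : Set K) := by
  have := isFractionRing_adjoin_of_adjoin_eq_top (R := ℤ) hgen
  let e := Matrix.toLinOfInv ba bb hUV hVU
  have he : e.toLinearMap ∘ₗ φa = φb ∘ₗ e :=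
    Matrix.toLinOfInv_comp_eq_comp_toLinOfInv ba bb hUV hVU hconj
  refine (e.adjoinLift fun x hx y ↦ ?_).exists_ne_zero_eq_image_mul
  obtain rfl : x = α := hx
  calc e (_ • y) = e (φa y) := congrArg e (Subtype.ext (hφa y).symm)
    _ = φb (e y) := LinearMap.congr_fun he y
    _ = _ • e y := Subtype.ext (hφb (e y))

/-- Injectivity in Latimer–MacDuffee: if the multiplication-by-`α` matrices of two
fractional `ℤ[α]`-ideals (in some `ℤ`-bases) are `GL_n(ℤ)`-conjugate, then the ideals
differ by a factor `x ∈ K*`. -/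
theorem conjugate_matrices_give_equiv_ideals {K : Type*} [Field K] [NumberField K]
    (f : Polynomial ℤ) (n : ℕ) (hn : f.natDegree = n) (hmonic : f.Monic)
    (hirr : Irreducible f) (α : K) (hroot : Polynomial.aeval α f = 0)
    (hgen : Algebra.adjoin ℚ ({α} : Set K) = ⊤)
    (hdim : Module.finrank ℚ K = n)
    (a b : Submodule (Algebra.adjoin ℤ ({α} : Set K)) K)
    (ha : a ≠ ⊥) (hafg : a.FG) (hb : b ≠ ⊥) (hbfg : b.FG)
    (ba : Module.Basis (Fin n) ℤ a) (bb : Module.Basis (Fin n) ℤ b)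
    (φa : a →ₗ[ℤ] a) (φb : b →ₗ[ℤ] b)
    (hφa : ∀ y : a, (φa y : K) = α * (y : K)) (hφb : ∀ y : b, (φb y : K) = α * (y : K))
    (U V : Matrix (Fin n) (Fin n) ℤ) (hUV : U * V = 1) (hVU : V * U = 1)
    (hconj : LinearMap.toMatrix bb bb φb = U * LinearMap.toMatrix ba ba φa * V) :
    ∃ x : K, x ≠ 0 ∧ (b : Set K) = (fun y => x * y) '' (a : Set K) :=
  conjugate_matrices_give_equiv_ideals_general n α hgen a b ba bb φa φb hφa hφb U V hUV hVU hconj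
end

section
/- Let f ∈ ℤ[T] be monic irreducible of degree n with root α, ℓ a prime dividing f(1), and A the matrix of multiplication by α on a fractional ℤ[α]-ideal 𝔞 with respect to a ℤ-basis. Then the element f(1)/(ℓ(1-α)) of K lies in (𝔞 : 𝔞) if and only if ℓ divides τ(I - A) = gcd(Cof(I - A)). -/
/-!
Put `M = 1 - A`, so that `det M = f(1)`, and let `θ` be the endomorphism of `𝔞` with matrix
`adj M`. Since `M` is the matrix of multiplication by `1 - α` and `M · adj M = det M · 1`, the
map `θ` is multiplication by `f(1)/(1 - α) = ℓ σ`, where `σ = f(1)/(ℓ(1 - α))`. Hence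
`σ 𝔞 ⊆ 𝔞` iff `θ(𝔞) ⊆ ℓ 𝔞`, iff every entry of `adj M` is divisible by `ℓ`, iff `ℓ ∣ τ(M)`.
-/

/-- Cofactor matrix: transpose of the adjugate. -/
def Cof {n : ℕ} (A : Matrix (Fin n) (Fin n) ℤ) : Matrix (Fin n) (Fin n) ℤ :=
  Matrix.transpose (Matrix.adjugate A)

/-- τ(A) = gcd of the entries of the cofactor matrix of A. -/
def tau {n : ℕ} (A : Matrix (Fin n) (Fin n) ℤ) : ℤ :=
  Finset.univ.gcd (fun p : Fin n × Fin n => Cof A p.1 p.2)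

open Matrix

theorem Matrix.det_one_sub_eq_eval_charpoly {R m : Type*} [CommRing R] [Fintype m]
    [DecidableEq m] (A : Matrix m m R) : (1 - A).det = A.charpoly.eval 1 := by
  rw [eval_charpoly, map_one]

theorem dvd_tau_iff {n : ℕ} (c : ℤ) (M : Matrix (Fin n) (Fin n) ℤ) :
    c ∣ tau M ↔ ∀ i j, c ∣ M.adjugate i j := by
  simp only [tau, Cof, Finset.dvd_gcd_iff, Finset.mem_univ, true_implies, Prod.forall,
    transpose_apply]
  exact forall_comm

theorem Matrix.forall_exists_toLin_eq_smul_iff {R V ι : Type*} [CommSemiring R]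
    [AddCommMonoid V] [Module R V] [Fintype ι] [DecidableEq ι] (b : Module.Basis ι R V)
    (N : Matrix ι ι R) (c : R) :
    (∀ x, ∃ y, toLin b b N x = c • y) ↔ ∀ i j, c ∣ N i j := by
  constructor
  · intro h i j
    obtain ⟨y, hy⟩ := h (b j)
    refine ⟨b.repr y i, ?_⟩
    simpa [hy] using LinearMap.toMatrix_apply b b (toLin b b N) i j
  · intro h x
    choose N' hN' using h
    refine ⟨toLin b b (Matrix.of N') x, ?_⟩
    rw [← LinearMap.smul_apply, ← map_smul]
    congr 2
    ext i j
    exact hN' i j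

theorem one_sub_mul_toLin_adjugate {R V K ι : Type*} [CommRing R] [AddCommGroup V]
    [Module R V] [CommRing K] [Algebra R K] [Fintype ι] [DecidableEq ι]
    (b : Module.Basis ι R V) (φ : V →ₗ[R] V) (j : V →ₗ[R] K) (α : K)
    (hφ : ∀ x, j (φ x) = α * j x) (x : V) :
    (1 - α) * j (toLin b b (1 - LinearMap.toMatrix b b φ).adjugate x) =
      algebraMap R K (1 - LinearMap.toMatrix b b φ).det * j x := by
  set A := LinearMap.toMatrix b b φ
  set θ := toLin b b (1 - A).adjugate
  have hθ : toLin b b (1 - A) (θ x) = (1 - A).det • x := by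
    rw [← toLin_mul_apply, mul_adjugate, map_smul, toLin_one]
    rfl
  rw [map_sub, toLin_one, toLin_toMatrix, LinearMap.sub_apply, LinearMap.id_apply] at hθ
  have h := congrArg j hθ
  rw [map_sub, hφ, map_smul, Algebra.smul_def] at h
  linear_combination h

theorem Submodule.mem_iff_exists_eq_intCast_smul {S K : Type*} [Ring S] [Ring K]
    [NoZeroDivisors K] [Module S K] (a : Submodule S K) {c : ℤ} (hc : (c : K) ≠ 0) {w : K}
    {z : a} (hz : (z : K) = c * w) : w ∈ a ↔ ∃ y : a, z = c • y := by
  constructor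
  · intro hw
    exact ⟨⟨w, hw⟩, Subtype.ext (by simp [hz])⟩
  · rintro ⟨y, rfl⟩
    have : w = y := mul_left_cancel₀ hc (by simpa using hz.symm)
    exact this ▸ y.2

theorem one_sub_ne_zero_of_aeval_eq_zero {K : Type*} [Ring K] [CharZero K] {f : Polynomial ℤ}
    {α : K} (hroot : Polynomial.aeval α f = 0) (hf1 : f.eval 1 ≠ 0) : 1 - α ≠ 0 := by
  rw [sub_ne_zero]
  rintro rfl
  simp [Polynomial.aeval_def, Polynomial.eval₂_at_one] at hroot
  exact hf1 hroot

theorem sigma_mem_multiplicator_iff_general {K : Type*} [Field K] [NumberField K]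
    (f : Polynomial ℤ) (n : ℕ)
    (α : K) (hroot : Polynomial.aeval α f = 0)
    (ℓ : ℕ) (hℓ : ℓ.Prime) (hf1 : f.eval 1 ≠ 0)
    (a : Submodule (Algebra.adjoin ℤ ({α} : Set K)) K)
    (b : Module.Basis (Fin n) ℤ a) (φ : a →ₗ[ℤ] a)
    (hφ : ∀ x : a, (φ x : K) = α * (x : K))
    (A : Matrix (Fin n) (Fin n) ℤ) (hA : LinearMap.toMatrix b b φ = A)
    (hchar : A.charpoly = f) :
    (∀ y ∈ a, (((f.eval 1 : ℤ) : K) / ((ℓ : K) * (1 - α))) * y ∈ a) ↔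
      (ℓ : ℤ) ∣ tau ((1 : Matrix (Fin n) (Fin n) ℤ) - A) := by
  have hα : (1 : K) - α ≠ 0 := one_sub_ne_zero_of_aeval_eq_zero hroot hf1
  have hℓ' : (ℓ : K) ≠ 0 := Nat.cast_ne_zero.2 hℓ.ne_zero
  have hθ (x : a) : (toLin b b (1 - A).adjugate x : K) =
      (ℓ : K) * ((((f.eval 1 : ℤ) : K) / ((ℓ : K) * (1 - α))) * x) := by
    have h := one_sub_mul_toLin_adjugate b φ a.subtype.toAddMonoidHom.toIntLinearMap α hφ x
    rw [hA, det_one_sub_eq_eval_charpoly, hchar, eq_intCast] at h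
    change (1 - α) * (toLin b b (1 - A).adjugate x : K) = _ * (x : K) at h
    field_simp
    linear_combination h
  rw [dvd_tau_iff, ← forall_exists_toLin_eq_smul_iff b, SetLike.forall]
  exact forall₂_congr fun x hx =>
    a.mem_iff_exists_eq_intCast_smul (by exact_mod_cast hℓ') (by exact_mod_cast hθ ⟨x, hx⟩)

/-- For a prime `ℓ ∣ f(1)` and `A` the matrix of multiplication by `α` on a fractional
`ℤ[α]`-ideal `𝔞`: the element `f(1)/(ℓ(1-α))` of `K` lies in `(𝔞 : 𝔞)` iff
`ℓ ∣ τ(I - A)`. -/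
theorem sigma_mem_multiplicator_iff {K : Type*} [Field K] [NumberField K]
    (f : Polynomial ℤ) (n : ℕ) (hn : f.natDegree = n) (hmonic : f.Monic)
    (hirr : Irreducible f) (α : K) (hroot : Polynomial.aeval α f = 0)
    (hgen : Algebra.adjoin ℚ ({α} : Set K) = ⊤)
    (hdim : Module.finrank ℚ K = n)
    (ℓ : ℕ) (hℓ : ℓ.Prime) (hdvd : (ℓ : ℤ) ∣ f.eval 1) (hf1 : f.eval 1 ≠ 0)
    (a : Submodule (Algebra.adjoin ℤ ({α} : Set K)) K) (ha : a ≠ ⊥) (hafg : a.FG)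
    (b : Module.Basis (Fin n) ℤ a) (φ : a →ₗ[ℤ] a)
    (hφ : ∀ x : a, (φ x : K) = α * (x : K))
    (A : Matrix (Fin n) (Fin n) ℤ) (hA : LinearMap.toMatrix b b φ = A)
    (hchar : A.charpoly = f) :
    (∀ y ∈ a, (((f.eval 1 : ℤ) : K) / ((ℓ : K) * (1 - α))) * y ∈ a) ↔
      (ℓ : ℤ) ∣ tau ((1 : Matrix (Fin n) (Fin n) ℤ) - A) :=
  sigma_mem_multiplicator_iff_general f n α hroot ℓ hℓ hf1 a b φ hφ A hA hchar
end

section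
/- Let A be a simple abelian variety over a finite field k with Frobenius endomorphism F, and suppose φ ∈ End(A) (endomorphisms over the algebraic closure) satisfies [m] = φ ∘ (1 - F) for some integer m. Then φ commutes with every endomorphism of A, i.e., φ lies in the center of the endomorphism ring. -/
theorem Commute.of_mul_right_of_isRightRegular {M : Type*} [Semigroup M] {a b c : M}
    (hc : IsRightRegular c) (hcb : Commute c b) (hacb : Commute (a * c) b) : Commute a b :=
  hc <| show a * b * c = b * a * c by
    rw [mul_assoc, ← hcb.eq, ← mul_assoc, hacb.eq, mul_assoc]

/-- The ring `R` stands for `End(A)`; `hreg` records that the isogeny `1 - F` is not a right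
zero divisor. -/
theorem phi_central {R : Type*} [Ring R] (F φ : R) (m : ℤ)
    (hF : ∀ x : R, F * x = x * F)
    (hreg : ∀ x : R, x * (1 - F) = 0 → x = 0)
    (hm : (m : R) = φ * (1 - F)) :
    ∀ ψ : R, φ * ψ = ψ * φ := by
  intro ψ
  have hregular : IsRightRegular (1 - F) := isRightRegular_iff_left_eq_zero_of_mul.mpr hreg
  have hcentral : Commute (1 - F) ψ := (Commute.one_left ψ).sub_left (hF ψ)
  have hmul : Commute (φ * (1 - F)) ψ := hm ▸ Int.cast_commute m ψ
  exact (Commute.of_mul_right_of_isRightRegular hregular hcentral hmul).eq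
end
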